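/- Let p be an odd prime. The Haar measure of the set of Diophantine pairs over ℤ_p, i.e. pairs (a,b) ∈ ℤ_p² with ab + 1 a square in ℤ_p, equals 1/2 + 1/(p(p+1)). -/

import Mathlib

open MeasureTheory

noncomputable instance (p : ℕ) [Fact p.Prime] : MeasurableSpace ℤ_[p] := borel _
instance (p : ℕ) [Fact p.Prime] : BorelSpace ℤ_[p] := ⟨rfl⟩

/-- The Haar measure on ℤ_p, normalized so that μ(ℤ_p) = 1. -/
noncomputable def μZp (p : ℕ) [Fact p.Prime] : Measure ℤ_[p] :=
  Measure.addHaarMeasure ⊤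

/-!
A unit of `ℤ_p` is a square iff its residue mod `p` is (Hensel, `p` odd). Multiplication by a unit
with non-square residue preserves Haar measure and swaps the square and non-square units, so the
squares fill half of the units, a set of measure `(1 - 1/p) / 2`. A square divisible by `p` is `p²`
times a square, so the squares `S` satisfy `μ S = (1 - 1/p) / 2 + μ S / p²`, i.e.
`μ S = p / (2 (p + 1))`. For fixed `a`, the fibre `{b | ab + 1 is a square}` is all of `ℤ_p` when
`p ∣ a`, and for a unit `a` it is the preimage of `S` under the measure-preserving map `b ↦ ab + 1`.
By Fubini the measure is `1/p + (1 - 1/p) μ S = 1/2 + 1/(p (p + 1))`.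
-/

open Measure IsLocalRing

theorem FiniteField.isSquare_mul_iff_not_isSquare {F : Type*} [Field F] [Fintype F]
    [DecidableEq F] {e c : F} (he : ¬IsSquare e) (hc : c ≠ 0) : IsSquare (e * c) ↔ ¬IsSquare c := by
  have he0 : e ≠ 0 := by rintro rfl; exact he IsSquare.zero
  rw [← quadraticChar_neg_one_iff_not_isSquare] at he ⊢
  rw [← quadraticChar_one_iff_isSquare (mul_ne_zero he0 hc), map_mul, he, neg_one_mul,
    neg_eq_iff_eq_neg]

theorem isClosed_setOf_isSquare {R : Type*} [Mul R] [TopologicalSpace R] [ContinuousMul R]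
    [CompactSpace R] [T2Space R] : IsClosed {x : R | IsSquare x} := by
  have : {x : R | IsSquare x} = Set.range (fun r => r * r) := by
    ext x; simp [IsSquare, eq_comm]
  rw [this]
  exact (isCompact_range (continuous_id.mul continuous_id)).isClosed

section CompactRing

variable {R : Type*} [Ring R] [TopologicalSpace R] [IsTopologicalRing R] [CompactSpace R]
  [MeasurableSpace R] [BorelSpace R] (μ : Measure R) [μ.IsAddHaarMeasure] [IsProbabilityMeasure μ]

theorem measurePreserving_mul_left_of_isUnit {a : R} (ha : IsUnit a) :
    MeasurePreserving (a * ·) μ μ := by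
  have hcont : Continuous (a * ·) := continuous_const_mul a
  have : (μ.map (a * ·)).IsAddHaarMeasure :=
    isAddHaarMeasure_map μ (AddMonoidHom.mulLeft a) hcont
      (fun y => ⟨↑ha.unit⁻¹ * y, by simp [← mul_assoc]⟩) (by simp [Filter.cocompact_eq_bot])
  have : IsProbabilityMeasure (μ.map (a * ·)) :=
    isProbabilityMeasure_map hcont.aemeasurable
  exact ⟨hcont.measurable, isAddHaarMeasure_eq_of_isProbabilityMeasure _ _⟩

theorem measure_mul_left_image [T2Space R] {a : R} (ha : IsLeftRegular a) (s : Set R) :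
    μ ((a * ·) '' s) = μ (Set.range (a * ·)) * μ s := by
  set ν := μ.comap (AddMonoidHom.mulLeft a)
  have hemb : MeasurableEmbedding (AddMonoidHom.mulLeft a) :=
    ((continuous_const_mul a).isClosedEmbedding ha).measurableEmbedding
  have : ν.IsAddLeftInvariant := IsAddLeftInvariant.comap μ hemb
  have : IsFiniteMeasure ν := ⟨by rw [hemb.comap_apply]; exact measure_lt_top _ _⟩
  have hν : ∀ t, ν t = ν.addHaarScalarFactor μ * μ t := fun t => by
    conv_lhs => rw [isAddInvariant_eq_smul_of_compactSpace ν μ]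
    rfl
  have huniv := hν Set.univ
  rw [measure_univ (μ := μ), mul_one, hemb.comap_apply, Set.image_univ] at huniv
  have hs := hν s
  rw [hemb.comap_apply] at hs
  exact hs.trans (by rw [← huniv]; rfl)

end CompactRing

namespace PadicInt

variable {p : ℕ} [Fact p.Prime]

theorem toZMod_eq_zero_iff {x : ℤ_[p]} : toZMod x = 0 ↔ x ∈ maximalIdeal ℤ_[p] := by
  rw [← RingHom.mem_ker, ker_toZMod]

theorem isUnit_iff_toZMod_ne_zero {x : ℤ_[p]} : IsUnit x ↔ toZMod x ≠ 0 := by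
  rw [Ne, toZMod_eq_zero_iff, mem_maximalIdeal, mem_nonunits_iff, not_not]

theorem isSquare_iff_isSquare_toZMod (hp : p ≠ 2) {x : ℤ_[p]} (hx : IsUnit x) :
    IsSquare x ↔ IsSquare (toZMod x) := by
  refine ⟨fun h => h.map toZMod, fun ⟨c, hc⟩ => ?_⟩
  obtain ⟨a, rfl⟩ := ZMod.ringHom_surjective toZMod c
  have ha : ‖a‖ = 1 := by
    rw [← isUnit_iff, isUnit_iff_toZMod_ne_zero]
    intro h0
    rw [isUnit_iff_toZMod_ne_zero, hc, h0, mul_zero] at hx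
    exact hx rfl
  have h2 : ‖(2 : ℤ_[p])‖ = 1 := by
    rw [← isUnit_iff, isUnit_iff_toZMod_ne_zero, map_ofNat]
    exact Ring.two_ne_zero (by rwa [ZMod.ringChar_zmod_n])
  have hdist : ‖a ^ 2 - x‖ < 1 := by
    rw [← not_isUnit_iff, isUnit_iff_toZMod_ne_zero, map_sub, map_pow, hc, not_not]
    ring
  obtain ⟨z, hz, -⟩ := hensels_lemma (F := Polynomial.X ^ 2 - Polynomial.C x) (a := a)
    (by simpa [one_add_one_eq_two, h2, ha] using hdist)
  exact ⟨z, by simpa [sub_eq_zero, sq, eq_comm] using hz⟩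

theorem isSquare_mul_iff_not_isSquare (hp : p ≠ 2) {ε x : ℤ_[p]} (hε : ¬IsSquare (toZMod ε))
    (hx : IsUnit x) : IsSquare (ε * x) ↔ ¬IsSquare x := by
  have hεu : IsUnit ε := isUnit_iff_toZMod_ne_zero.2 fun h => hε (h ▸ IsSquare.zero)
  rw [isSquare_iff_isSquare_toZMod hp (hεu.mul hx), isSquare_iff_isSquare_toZMod hp hx, map_mul,
    FiniteField.isSquare_mul_iff_not_isSquare hε (isUnit_iff_toZMod_ne_zero.1 hx)]

theorem range_mul_p : Set.range ((p : ℤ_[p]) * ·) = maximalIdeal ℤ_[p] := by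
  ext x
  simp [maximalIdeal_eq_span_p, Ideal.mem_span_singleton', eq_comm, mul_comm]

theorem index_maximalIdeal : (maximalIdeal ℤ_[p]).toAddSubgroup.index = p := by
  have : (maximalIdeal ℤ_[p]).toAddSubgroup = (toZMod (p := p)).toAddMonoidHom.ker := by
    ext x; simp [← ker_toZMod]
  rw [this, AddSubgroup.index_ker, AddMonoidHom.range_eq_top.2 (ZMod.ringHom_surjective toZMod)]
  simp

theorem maximalIdeal_eq_ball : (maximalIdeal ℤ_[p] : Set ℤ_[p]) = Metric.ball 0 1 := by
  ext x
  simp [not_isUnit_iff]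

theorem measurableSet_maximalIdeal : MeasurableSet (maximalIdeal ℤ_[p] : Set ℤ_[p]) :=
  maximalIdeal_eq_ball (p := p) ▸ Metric.isOpen_ball.measurableSet

instance : (μZp p).IsAddHaarMeasure := by unfold μZp; infer_instance

instance : IsProbabilityMeasure (μZp p) :=
  ⟨by simpa [μZp] using addHaarMeasure_self (K₀ := (⊤ : TopologicalSpace.PositiveCompacts ℤ_[p]))⟩

theorem μZp_maximalIdeal : μZp p (maximalIdeal ℤ_[p]) = (p : ENNReal)⁻¹ := by
  have : (maximalIdeal ℤ_[p]).toAddSubgroup.FiniteIndex :=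
    ⟨index_maximalIdeal.trans_ne (Nat.Prime.ne_zero Fact.out)⟩
  have h := AddSubgroup.index_mul_measure (maximalIdeal ℤ_[p]).toAddSubgroup
    measurableSet_maximalIdeal (μZp p)
  rw [index_maximalIdeal, measure_univ] at h
  exact ENNReal.eq_inv_of_mul_eq_one_left (by rwa [mul_comm] at h)

theorem μZp_real_maximalIdeal : (μZp p).real (maximalIdeal ℤ_[p]) = (p : ℝ)⁻¹ := by
  simp [measureReal_def, μZp_maximalIdeal]

theorem measurableSet_setOf_isSquare : MeasurableSet {x : ℤ_[p] | IsSquare x} :=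
  isClosed_setOf_isSquare.measurableSet

theorem setOf_isSquare_inter_maximalIdeal :
    {x : ℤ_[p] | IsSquare x} ∩ maximalIdeal ℤ_[p]
      = ((p : ℤ_[p]) * ·) '' (((p : ℤ_[p]) * ·) '' {x | IsSquare x}) := by
  ext x
  simp only [Set.mem_inter_iff, Set.mem_ofPred_eq, Set.image_image,
    Set.mem_image, ← range_mul_p, Set.mem_range]
  constructor
  · rintro ⟨⟨r, rfl⟩, y, hy⟩
    obtain ⟨w, rfl⟩ : (p : ℤ_[p]) ∣ r := prime_p.dvd_mul.1 ⟨y, hy.symm⟩ |>.elim id id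
    exact ⟨w * w, ⟨w, rfl⟩, by ring⟩
  · rintro ⟨y, ⟨w, rfl⟩, rfl⟩
    exact ⟨⟨p * w, by ring⟩, p * (w * w), rfl⟩

theorem μZp_setOf_isSquare_inter_maximalIdeal :
    μZp p ({x | IsSquare x} ∩ maximalIdeal ℤ_[p])
      = (p : ENNReal)⁻¹ * ((p : ENNReal)⁻¹ * μZp p {x | IsSquare x}) := by
  have hp : IsLeftRegular (p : ℤ_[p]) := (IsRegular.of_ne_zero prime_p.ne_zero).left
  rw [setOf_isSquare_inter_maximalIdeal, measure_mul_left_image _ hp, measure_mul_left_image _ hp,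
    range_mul_p, μZp_maximalIdeal]

theorem two_mul_μZp_real_compl_maximalIdeal_inter_setOf_isSquare (hp : p ≠ 2) :
    2 * (μZp p).real ((maximalIdeal ℤ_[p] : Set ℤ_[p])ᶜ ∩ {x | IsSquare x}) = 1 - (p : ℝ)⁻¹ := by
  obtain ⟨e, he⟩ := FiniteField.exists_nonsquare (F := ZMod p) (by rwa [ZMod.ringChar_zmod_n])
  obtain ⟨ε, rfl⟩ := ZMod.ringHom_surjective toZMod e
  have hεu : IsUnit ε := isUnit_iff_toZMod_ne_zero.2 fun h => he (h ▸ IsSquare.zero)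
  set U := (maximalIdeal ℤ_[p] : Set ℤ_[p])ᶜ
  have hU : ∀ {x}, x ∈ U ↔ IsUnit x := by simp [U]
  have hswap : (ε * ·) ⁻¹' (U \ {x | IsSquare x}) = U ∩ {x | IsSquare x} := by
    ext x
    simp only [Set.mem_preimage, Set.mem_sdiff, Set.mem_inter_iff, Set.mem_ofPred_eq, hU,
      IsUnit.mul_iff, hεu, true_and]
    exact and_congr_right fun hx => (isSquare_mul_iff_not_isSquare hp he hx).not_left
  have hhalf : (μZp p).real (U ∩ {x | IsSquare x}) = (μZp p).real (U \ {x | IsSquare x}) := by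
    rw [← hswap]
    exact (measurePreserving_mul_left_of_isUnit _ hεu).measureReal_preimage
      (measurableSet_maximalIdeal.compl.diff measurableSet_setOf_isSquare).nullMeasurableSet
  have hsplit := measureReal_inter_add_sdiff (μ := μZp p) (s := U) measurableSet_setOf_isSquare
  rw [probReal_compl_eq_one_sub measurableSet_maximalIdeal, μZp_real_maximalIdeal] at hsplit
  linarith

theorem μZp_real_setOf_isSquare (hp : p ≠ 2) :
    (μZp p).real {x : ℤ_[p] | IsSquare x} = p / (2 * (p + 1)) := by
  have hsplit := measureReal_inter_add_sdiff (μ := μZp p) (s := {x : ℤ_[p] | IsSquare x})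
    measurableSet_maximalIdeal
  have hunits := two_mul_μZp_real_compl_maximalIdeal_inter_setOf_isSquare hp
  have hnonunits : (μZp p).real ({x | IsSquare x} ∩ maximalIdeal ℤ_[p])
      = (p : ℝ)⁻¹ * ((p : ℝ)⁻¹ * (μZp p).real {x | IsSquare x}) := by
    simp [measureReal_def, μZp_setOf_isSquare_inter_maximalIdeal]
  rw [Set.sdiff_eq_compl_inter] at hsplit
  have hp0 : (p : ℝ) ≠ 0 := by exact_mod_cast (Fact.out : p.Prime).ne_zero
  have hp1 : (p : ℝ) - 1 ≠ 0 := sub_ne_zero.2 (by exact_mod_cast (Fact.out : p.Prime).ne_one)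
  field_simp at hunits hnonunits ⊢
  apply mul_left_cancel₀ hp1
  linear_combination (-2 * (p : ℝ) ^ 2) * hsplit + 2 * hnonunits + (p : ℝ) * hunits

theorem μZp_prod_setOf_isSquare_mul_add_one (hp : p ≠ 2) :
    (μZp p).prod (μZp p) {x : ℤ_[p] × ℤ_[p] | IsSquare (x.1 * x.2 + 1)}
      = μZp p (maximalIdeal ℤ_[p]) + μZp p (maximalIdeal ℤ_[p])ᶜ * μZp p {x | IsSquare x} := by
  have hmeas : MeasurableSet {x : ℤ_[p] × ℤ_[p] | IsSquare (x.1 * x.2 + 1)} :=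
    measurableSet_setOf_isSquare.preimage (by fun_prop)
  have hfiber_nonunit : ∀ a ∈ (maximalIdeal ℤ_[p] : Set ℤ_[p]),
      μZp p (Prod.mk a ⁻¹' {x | IsSquare (x.1 * x.2 + 1)}) = 1 := fun a ha => by
    convert measure_univ (μ := μZp p)
    refine Set.eq_univ_of_forall fun b => ?_
    have hres : toZMod (a * b + 1) = 1 := by
      rw [map_add, map_mul, toZMod_eq_zero_iff.2 ha, zero_mul, zero_add, map_one]
    exact (isSquare_iff_isSquare_toZMod hp (isUnit_iff_toZMod_ne_zero.2 (hres ▸ one_ne_zero))).2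
      (hres ▸ IsSquare.one)
  have hfiber_unit : ∀ a ∈ (maximalIdeal ℤ_[p] : Set ℤ_[p])ᶜ,
      μZp p (Prod.mk a ⁻¹' {x | IsSquare (x.1 * x.2 + 1)}) = μZp p {x | IsSquare x} := fun a ha =>
    ((measurePreserving_add_right _ 1).comp
      (measurePreserving_mul_left_of_isUnit _ (by simpa using ha))).measure_preimage
      measurableSet_setOf_isSquare.nullMeasurableSet
  rw [Measure.prod_apply hmeas, ← lintegral_add_compl _ measurableSet_maximalIdeal,
    setLIntegral_congr_fun measurableSet_maximalIdeal hfiber_nonunit,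
    setLIntegral_congr_fun measurableSet_maximalIdeal.compl hfiber_unit,
    setLIntegral_const, setLIntegral_const, one_mul, mul_comm]

end PadicInt

open PadicInt in
theorem stmt5 (p : ℕ) [Fact p.Prime] (hp : p ≠ 2) :
    (((μZp p).prod (μZp p)) {x : ℤ_[p] × ℤ_[p] | IsSquare (x.1 * x.2 + 1)}).toReal
      = 1/2 + 1/(p*(p+1)) := by
  rw [μZp_prod_setOf_isSquare_mul_add_one hp, ENNReal.toReal_add (by finiteness) (by finiteness),
    ENNReal.toReal_mul]
  simp only [← measureReal_def]
  rw [probReal_compl_eq_one_sub measurableSet_maximalIdeal, μZp_real_maximalIdeal,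
    μZp_real_setOf_isSquare hp]
  have hp0 : (p : ℝ) ≠ 0 := by exact_mod_cast (Fact.out : p.Prime).ne_zero
  field_simp
  ring
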